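/- Generalized Boyer's lemma: Let (Γ,κ) be a graded graph, φ a harmonic function, I ⊆ Γ an ideal, J = Γ∖I, and λ ∈ J_n a vertex. Suppose there are m ∈ ℕ and non-negative reals {β_ν}_{ν∈I_m} such that (i) some ν ∈ I_m has β_ν ≠ 0 and φ(ν) > 0, and (ii) for all sufficiently large l and all η ∈ I_{n+l+1}: Σ_{μ∈J_{n+l}} dim(λ,μ)κ(μ,η) ≥ Σ_{ν∈I_m} β_ν dim(ν,η). Then φ(λ) = +∞. -/

import Mathlib

open Filter Topology ENNReal
open scoped Classical

noncomputable section

structure GradedGraph where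
  V : Type
  lvl : V → ℕ
  levelFinite : ∀ n : ℕ, {v : V | lvl v = n}.Finite
  k : V → V → ℝ
  k_nonneg : ∀ a b, 0 ≤ k a b
  k_grade : ∀ a b, k a b ≠ 0 → lvl b = lvl a + 1
  exists_up : ∀ a, ∃ b, 0 < k a b

namespace GradedGraph

variable (G : GradedGraph)

/-- The edge relation `λ ↗ μ`. -/
def Adj (a b : G.V) : Prop := 0 < G.k a b

/-- The path order: `a ≤ b` iff there is a (possibly empty) path from `a` to `b`. -/
def Le : G.V → G.V → Prop := Relation.ReflTransGen G.Adj

/-- `dimAux n a b` : weighted number of paths of length `n` from `a` to `b`. -/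
def dimAux : ℕ → G.V → G.V → ℝ
  | 0, a, b => if a = b then 1 else 0
  | n + 1, a, b => ∑ᶠ c, dimAux n a c * G.k c b

/-- The shifted dimension `dim(a,b)`: weighted number of paths from `a` to `b`. -/
def dim (a b : G.V) : ℝ := G.dimAux (G.lvl b - G.lvl a) a b

def IsIdeal (I : Set G.V) : Prop := ∀ a ∈ I, ∀ b, G.Le a b → b ∈ I

def IsCoideal (J : Set G.V) : Prop := ∀ a ∈ J, ∀ b, G.Le b a → b ∈ J

def IsSaturatedIdeal (I : Set G.V) : Prop :=
  G.IsIdeal I ∧ ∀ a, (∀ b, G.Adj a b → b ∈ I) → a ∈ I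

def IsSaturatedCoideal (J : Set G.V) : Prop :=
  G.IsCoideal J ∧ ∀ a ∈ J, ∃ b ∈ J, G.Adj a b

def IsPrimitiveCoideal (J : Set G.V) : Prop :=
  G.IsSaturatedCoideal J ∧ ∀ J1 J2 : Set G.V, G.IsSaturatedCoideal J1 →
    G.IsSaturatedCoideal J2 → J = J1 ∪ J2 → J = J1 ∨ J = J2

/-- A harmonic function `φ : Γ → ℝ≥0 ∪ {+∞}`. -/
def Harmonic (φ : G.V → ℝ≥0∞) : Prop :=
  ∀ a, φ a = ∑ᶠ b, ENNReal.ofReal (G.k a b) * φ b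

/-- The submodule of relations `λ = Σ_{μ : λ↗μ} κ(λ,μ)·μ` in the free module on vertices. -/
def relSub : Submodule ℝ (G.V →₀ ℝ) :=
  Submodule.span ℝ
    {x | ∃ a : G.V, x = Finsupp.single a 1 - ∑ᶠ b, G.k a b • Finsupp.single b (1 : ℝ)}

/-- The group `K_0(Γ)`. -/
abbrev K0 := (G.V →₀ ℝ) ⧸ G.relSub

def toK0 : (G.V →₀ ℝ) →ₗ[ℝ] G.K0 := G.relSub.mkQ

/-- The class of a vertex in `K_0(Γ)`. -/
def vtx (a : G.V) : G.K0 := G.toK0 (Finsupp.single a 1)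

/-- The positive cone `K_0^+(Γ)` generated by the vertices. -/
def cone : Set G.K0 := {x | ∃ c : G.V →₀ ℝ, (∀ a, 0 ≤ c a) ∧ x = G.toK0 c}

/-- The partial order `x ≤_K y` defined by the cone. -/
def leK (x y : G.K0) : Prop := y - x ∈ G.cone

/-- The value of (the `ℝ≥0`-linear extension of) `φ` on a nonnegative element of the
free module on vertices. -/
def evalC (φ : G.V → ℝ≥0∞) (c : G.V →₀ ℝ) : ℝ≥0∞ :=
  ∑ a ∈ c.support, ENNReal.ofReal (c a) * φ a

/-- A semifinite harmonic function: it is harmonic, not everywhere finite, and its value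
on any element of the cone is the supremum of its finite values on smaller cone elements
(stated on nonnegative representatives). -/
def Semifinite (φ : G.V → ℝ≥0∞) : Prop :=
  G.Harmonic φ ∧ (∃ a, φ a = ⊤) ∧
    ∀ c : G.V →₀ ℝ, (∀ a, 0 ≤ c a) →
      G.evalC φ c = ⨆ d : {d : G.V →₀ ℝ //
        (∀ a, 0 ≤ d a) ∧ G.leK (G.toK0 d) (G.toK0 c) ∧ G.evalC φ d ≠ ⊤},
          G.evalC φ d.1

/-- A finite or semifinite harmonic function. -/
def FinOrSemifinite (φ : G.V → ℝ≥0∞) : Prop :=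
  (G.Harmonic φ ∧ ∀ a, φ a ≠ ⊤) ∨ G.Semifinite φ

/-- An indecomposable (finite or semifinite, not identically zero) harmonic function:
any finite or semifinite harmonic `ψ ≤ φ` not vanishing identically on the finiteness
ideal of `φ` is proportional to `φ` on the finiteness ideal of `φ`. -/
def Indecomposable (φ : G.V → ℝ≥0∞) : Prop :=
  G.FinOrSemifinite φ ∧ (∃ a, φ a ≠ 0) ∧
    ∀ ψ : G.V → ℝ≥0∞, G.FinOrSemifinite ψ → (∀ a, ψ a ≤ φ a) →
      (∃ a, φ a ≠ ⊤ ∧ ψ a ≠ 0) →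
        ∃ C : ℝ≥0∞, ∀ a, φ a ≠ ⊤ → ψ a = C * φ a

end GradedGraph

structure BranchingGraph extends GradedGraph where
  root : V
  root_lvl : lvl root = 0
  root_unique : ∀ v, lvl v = 0 → v = root
  exists_down : ∀ v, lvl v ≠ 0 → ∃ u, 0 < k u v

end

/-!
Write `n = lvl λ` and `T l = Σ_{η ∈ I_{n+l}} dim(λ,η) φ(η)`. Iterating harmonicity gives
`φ(λ) = Σ_{η ∈ Γ_{n+l}} dim(λ,η) φ(η) ≥ T l`. Since `I` is upward closed, mass that has reached `I`
stays in `I`, so `T (l+1) = T l + C l`, where `C l` is the mass entering `I_{n+l+1}` from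
`J_{n+l}`. By (ii), and harmonicity at `ν` expanded inside `I`, `C l ≥ β_ν φ(ν) > 0` for all large
`l`. Thus `T` is unbounded yet stays below `φ(λ)`, so `φ(λ) = ∞`.
-/

namespace ENNReal

theorem eq_top_of_forall_nat_mul_le {c x : ℝ≥0∞} (hc : c ≠ 0) (h : ∀ j : ℕ, (j : ℝ≥0∞) * c ≤ x) :
    x = ⊤ := by
  by_contra hx
  have hcx : c ≠ ⊤ := ne_top_of_le_ne_top hx (by simpa using h 1)
  obtain ⟨j, hj⟩ := ENNReal.exists_nat_gt (ENNReal.div_lt_top hx hc).ne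
  exact (ENNReal.div_lt_iff (Or.inl hc) (Or.inl hcx)).1 hj |>.not_ge (h j)

theorem eq_top_of_add_le_succ {T : ℕ → ℝ≥0∞} {c x : ℝ≥0∞} (hc : c ≠ 0) (l₀ : ℕ)
    (hstep : ∀ l ≥ l₀, T l + c ≤ T (l + 1)) (hle : ∀ l, T l ≤ x) : x = ⊤ := by
  have hgrowth : ∀ j : ℕ, (j : ℝ≥0∞) * c ≤ T (l₀ + j) := by
    intro j
    induction j with
    | zero => simp
    | succ j ih =>
      calc ((j + 1 : ℕ) : ℝ≥0∞) * c = j * c + c := by push_cast; ring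
        _ ≤ T (l₀ + j) + c := by gcongr
        _ ≤ T (l₀ + (j + 1)) := hstep _ (Nat.le_add_right _ _)
  exact eq_top_of_forall_nat_mul_le hc fun j => (hgrowth j).trans (hle _)

end ENNReal

namespace GradedGraph

variable (G : GradedGraph)

noncomputable def level (n : ℕ) : Finset G.V := (G.levelFinite n).toFinset

variable {G}

@[simp]
theorem mem_level {n : ℕ} {v : G.V} : v ∈ G.level n ↔ G.lvl v = n := by
  simp [level]

theorem finsum_mem_lvl_eq_sum {M : Type*} [AddCommMonoid M] (p : G.V → Prop) [DecidablePred p]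
    (n : ℕ) (f : G.V → M) :
    ∑ᶠ v ∈ {v : G.V | p v ∧ G.lvl v = n}, f v = ∑ v ∈ (G.level n).filter p, f v := by
  rw [← finsum_mem_coe_finset]
  congr 1
  ext v
  simp [and_comm]

theorem dimAux_nonneg (n : ℕ) (a b : G.V) : 0 ≤ G.dimAux n a b := by
  induction n generalizing b with
  | zero => rw [dimAux]; split <;> norm_num
  | succ n ih => exact finsum_nonneg fun c => mul_nonneg (ih c) (G.k_nonneg c b)

theorem dim_nonneg (a b : G.V) : 0 ≤ G.dim a b := dimAux_nonneg _ a b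

theorem dim_eq_dimAux {a b : G.V} {l : ℕ} (h : G.lvl b = G.lvl a + l) :
    G.dim a b = G.dimAux l a b := by
  rw [dim, h, Nat.add_sub_cancel_left]

theorem exists_dimAux_mul_k_ne_zero {n : ℕ} {a b : G.V} (h : G.dimAux (n + 1) a b ≠ 0) :
    ∃ c, G.dimAux n a c ≠ 0 ∧ G.k c b ≠ 0 := by
  obtain ⟨c, hc⟩ : ∃ c, G.dimAux n a c * G.k c b ≠ 0 := by
    by_contra! hall
    exact h (finsum_eq_zero_of_forall_eq_zero hall)
  exact ⟨c, left_ne_zero_of_mul hc, right_ne_zero_of_mul hc⟩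

theorem lvl_eq_of_dimAux_ne_zero {n : ℕ} {a b : G.V} (h : G.dimAux n a b ≠ 0) :
    G.lvl b = G.lvl a + n := by
  induction n generalizing b with
  | zero => by_cases hab : a = b <;> simp_all [dimAux]
  | succ n ih =>
    obtain ⟨c, hac, hcb⟩ := exists_dimAux_mul_k_ne_zero h
    rw [G.k_grade c b hcb, ih hac, add_assoc]

theorem le_of_dimAux_ne_zero {n : ℕ} {a b : G.V} (h : G.dimAux n a b ≠ 0) : G.Le a b := by
  induction n generalizing b with
  | zero => by_cases hab : a = b <;> simp_all [dimAux, Le, Relation.ReflTransGen.refl]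
  | succ n ih =>
    obtain ⟨c, hac, hcb⟩ := exists_dimAux_mul_k_ne_zero h
    exact (ih hac).tail ((G.k_nonneg c b).lt_of_ne' hcb)

theorem dimAux_succ (n : ℕ) (a b : G.V) :
    G.dimAux (n + 1) a b = ∑ c ∈ G.level (G.lvl a + n), G.dimAux n a c * G.k c b := by
  rw [dimAux]
  refine finsum_eq_sum_of_support_subset _ fun c hc => ?_
  exact mem_level.2 (lvl_eq_of_dimAux_ne_zero (left_ne_zero_of_mul hc))

theorem dimAux_one (a b : G.V) : G.dimAux 1 a b = G.k a b := by
  rw [dimAux, finsum_eq_single _ a fun c hc => by simp [dimAux, Ne.symm hc]]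
  simp [dimAux]

noncomputable def idealMass (φ : G.V → ℝ≥0∞) (I : Set G.V) (a : G.V) (l : ℕ) :
    ℝ≥0∞ :=
  ∑ b ∈ (G.level (G.lvl a + l)).filter (· ∈ I), ENNReal.ofReal (G.dimAux l a b) * φ b

noncomputable def crossingMass (φ : G.V → ℝ≥0∞) (I : Set G.V) (a : G.V) (l : ℕ) :
    ℝ≥0∞ :=
  ∑ η ∈ (G.level (G.lvl a + (l + 1))).filter (· ∈ I),
    ENNReal.ofReal
      (∑ μ ∈ (G.level (G.lvl a + l)).filter (· ∉ I), G.dimAux l a μ * G.k μ η) * φ η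

namespace Harmonic

variable {φ : G.V → ℝ≥0∞} (hφ : G.Harmonic φ)
include hφ

theorem eq_sum_level_succ (a : G.V) :
    φ a = ∑ b ∈ G.level (G.lvl a + 1), ENNReal.ofReal (G.k a b) * φ b := by
  rw [hφ a]
  refine finsum_eq_sum_of_support_subset _ fun b hb => mem_level.2 (G.k_grade a b ?_)
  rintro hk
  simp [hk] at hb

theorem eq_sum_level_dimAux (a : G.V) (l : ℕ) :
    φ a = ∑ b ∈ G.level (G.lvl a + l), ENNReal.ofReal (G.dimAux l a b) * φ b := by
  induction l with
  | zero => simp [dimAux, apply_ite ENNReal.ofReal, ite_mul, Finset.sum_ite_eq]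
  | succ l ih =>
    calc φ a = ∑ c ∈ G.level (G.lvl a + l), ∑ b ∈ G.level (G.lvl a + (l + 1)),
        ENNReal.ofReal (G.dimAux l a c) * (ENNReal.ofReal (G.k c b) * φ b) := by
          rw [ih]
          refine Finset.sum_congr rfl fun c hc => ?_
          rw [← Finset.mul_sum, ← add_assoc, ← mem_level.1 hc, ← hφ.eq_sum_level_succ]
      _ = ∑ b ∈ G.level (G.lvl a + (l + 1)), ENNReal.ofReal (G.dimAux (l + 1) a b) * φ b := by
          rw [Finset.sum_comm]
          refine Finset.sum_congr rfl fun b _ => ?_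
          rw [dimAux_succ, ENNReal.ofReal_sum_of_nonneg fun c _ =>
            mul_nonneg (dimAux_nonneg l a c) (G.k_nonneg c b), Finset.sum_mul]
          simp only [ENNReal.ofReal_mul (dimAux_nonneg _ _ _), mul_assoc]

theorem eq_sum_ideal_level_dimAux {I : Set G.V} (hI : G.IsIdeal I) {a : G.V} (ha : a ∈ I)
    (l : ℕ) :
    φ a = ∑ b ∈ (G.level (G.lvl a + l)).filter (· ∈ I),
      ENNReal.ofReal (G.dimAux l a b) * φ b := by
  rw [Finset.sum_filter_of_ne fun b _ hb =>
    hI a ha b (le_of_dimAux_ne_zero (n := l) fun hd => by simp [hd] at hb)]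
  exact hφ.eq_sum_level_dimAux a l

theorem idealMass_le (I : Set G.V) (a : G.V) (l : ℕ) : idealMass φ I a l ≤ φ a := by
  rw [hφ.eq_sum_level_dimAux a l]
  exact Finset.sum_le_sum_of_subset (Finset.filter_subset _ _)

theorem idealMass_succ {I : Set G.V} (hI : G.IsIdeal I) (a : G.V) (l : ℕ) :
    idealMass φ I a (l + 1) = idealMass φ I a l + crossingMass φ I a l := by
  have hstay : ∑ η ∈ (G.level (G.lvl a + (l + 1))).filter (· ∈ I),
      ENNReal.ofReal
        (∑ μ ∈ (G.level (G.lvl a + l)).filter (· ∈ I), G.dimAux l a μ * G.k μ η) * φ η =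
      idealMass φ I a l := by
    simp only [ENNReal.ofReal_sum_of_nonneg fun μ _ =>
      mul_nonneg (dimAux_nonneg l a μ) (G.k_nonneg μ _), Finset.sum_mul]
    rw [Finset.sum_comm]
    refine Finset.sum_congr rfl fun μ hμ => ?_
    obtain ⟨hμl, hμI⟩ := Finset.mem_filter.1 hμ
    rw [hφ.eq_sum_ideal_level_dimAux hI hμI 1, Finset.mul_sum, mem_level.1 hμl, add_assoc]
    refine Finset.sum_congr rfl fun η _ => ?_
    rw [dimAux_one, ENNReal.ofReal_mul (dimAux_nonneg l a μ), mul_assoc]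
  rw [← hstay, crossingMass, ← Finset.sum_add_distrib, idealMass]
  refine Finset.sum_congr rfl fun η _ => ?_
  rw [dimAux_succ, ← Finset.sum_filter_add_sum_filter_not _ (· ∈ I), ENNReal.ofReal_add
    (Finset.sum_nonneg fun μ _ => mul_nonneg (dimAux_nonneg l a μ) (G.k_nonneg μ η))
    (Finset.sum_nonneg fun μ _ => mul_nonneg (dimAux_nonneg l a μ) (G.k_nonneg μ η)), add_mul]

theorem ofReal_mul_le_crossingMass {I : Set G.V} (hI : G.IsIdeal I) {a ν : G.V} {l : ℕ}
    (hν : ν ∈ I) (hlvl : G.lvl ν ≤ G.lvl a + (l + 1)) {b : ℝ}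
    (h : ∀ η ∈ I, G.lvl η = G.lvl a + (l + 1) →
      b * G.dim ν η ≤
        ∑ μ ∈ (G.level (G.lvl a + l)).filter (· ∉ I), G.dimAux l a μ * G.k μ η) :
    ENNReal.ofReal b * φ ν ≤ crossingMass φ I a l := by
  obtain ⟨d, hd⟩ := Nat.exists_eq_add_of_le hlvl
  rw [hφ.eq_sum_ideal_level_dimAux hI hν d, ← hd, Finset.mul_sum]
  refine Finset.sum_le_sum fun η hη => ?_
  obtain ⟨hηl, hηI⟩ := Finset.mem_filter.1 hη
  rw [← mul_assoc, ← ENNReal.ofReal_mul' (dimAux_nonneg d ν η),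
    ← dim_eq_dimAux ((mem_level.1 hηl).trans hd)]
  gcongr
  exact h η hηI (mem_level.1 hηl)

end Harmonic

end GradedGraph

theorem generalized_boyer_general (G : GradedGraph) (φ : G.V → ℝ≥0∞) (hφ : G.Harmonic φ)
    (I : Set G.V) (hI : G.IsIdeal I) (lam : G.V)
    (m : ℕ) (β : G.V → ℝ) (hβ0 : ∀ ν, 0 ≤ β ν)
    (hex : ∃ ν, ν ∈ I ∧ G.lvl ν = m ∧ β ν ≠ 0 ∧ φ ν ≠ 0)
    (hineq : ∃ L, ∀ l ≥ L, ∀ η, η ∈ I → G.lvl η = G.lvl lam + l + 1 →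
      (∑ᶠ ν ∈ {ν : G.V | ν ∈ I ∧ G.lvl ν = m}, β ν * G.dim ν η) ≤
        ∑ᶠ μ ∈ {μ : G.V | μ ∉ I ∧ G.lvl μ = G.lvl lam + l},
          G.dim lam μ * G.k μ η) :
    φ lam = ⊤ := by
  obtain ⟨ν, hνI, hνm, hβν, hφν⟩ := hex
  obtain ⟨L, hL⟩ := hineq
  have hc : ENNReal.ofReal (β ν) * φ ν ≠ 0 :=
    mul_ne_zero (ENNReal.ofReal_pos.2 ((hβ0 ν).lt_of_ne' hβν)).ne' hφν
  refine ENNReal.eq_top_of_add_le_succ hc (max L m) (fun l hl => ?_) (hφ.idealMass_le I lam)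
  rw [hφ.idealMass_succ hI]
  gcongr
  refine hφ.ofReal_mul_le_crossingMass hI hνI (by omega) fun η hηI hηl => ?_
  have hsum := hL l (le_of_max_le_left hl) η hηI hηl
  rw [GradedGraph.finsum_mem_lvl_eq_sum, GradedGraph.finsum_mem_lvl_eq_sum] at hsum
  calc β ν * G.dim ν η ≤ ∑ ν' ∈ (G.level m).filter (· ∈ I), β ν' * G.dim ν' η :=
        Finset.single_le_sum (fun ν' _ => mul_nonneg (hβ0 ν') (GradedGraph.dim_nonneg ν' η))
          (Finset.mem_filter.2 ⟨GradedGraph.mem_level.2 hνm, hνI⟩)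
    _ ≤ _ := hsum
    _ = _ := Finset.sum_congr rfl fun μ hμ => by
        rw [GradedGraph.dim_eq_dimAux (GradedGraph.mem_level.1 (Finset.mem_filter.1 hμ).1)]

/-- Generalized Boyer's lemma. -/
theorem generalized_boyer (G : GradedGraph) (φ : G.V → ℝ≥0∞) (hφ : G.Harmonic φ)
    (I : Set G.V) (hI : G.IsIdeal I) (lam : G.V) (hlam : lam ∉ I)
    (m : ℕ) (β : G.V → ℝ) (hβ0 : ∀ ν, 0 ≤ β ν)
    (hβsupp : ∀ ν, β ν ≠ 0 → ν ∈ I ∧ G.lvl ν = m)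
    (hex : ∃ ν, ν ∈ I ∧ G.lvl ν = m ∧ β ν ≠ 0 ∧ φ ν ≠ 0)
    (hineq : ∃ L, ∀ l ≥ L, ∀ η, η ∈ I → G.lvl η = G.lvl lam + l + 1 →
      (∑ᶠ ν ∈ {ν : G.V | ν ∈ I ∧ G.lvl ν = m}, β ν * G.dim ν η) ≤
        ∑ᶠ μ ∈ {μ : G.V | μ ∉ I ∧ G.lvl μ = G.lvl lam + l},
          G.dim lam μ * G.k μ η) :
    φ lam = ⊤ :=
  generalized_boyer_general G φ hφ I hI lam m β hβ0 hex hineq
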